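/- If L1 and L2 are languages recognised by history-deterministic VASS (with coverability acceptance), then L1 ∪ L2 is recognised by a history-deterministic VASS (with coverability acceptance). Consequently, the class of history-deterministic VASS languages is closed under finite unions. -/

import Mathlib

open scoped Classical

/-- A `k`-dimensional vector addition system with states over alphabet `A`.
States are `Fin n`; transitions are labelled by a letter and an effect in `ℤ^k`. -/
structure VASS (k : ℕ) (A : Type) where
  n : ℕ
  trans : Set (Fin n × A × (Fin k → ℤ) × Fin n)
  init : Fin n
  acc : Set (Fin n)

namespace VASS

variable {k : ℕ} {A : Type}

/-- A configuration: a state together with counters in `ℕ^k`. -/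
abbrev Conf (V : VASS k A) := Fin V.n × (Fin k → ℕ)

/-- `Run V c w c'`: there is a valid run of `V` from configuration `c` to `c'`
reading the word `w`, with counters staying nonnegative throughout. -/
inductive Run (V : VASS k A) : V.Conf → List A → V.Conf → Prop
  | nil (c : V.Conf) : Run V c [] c
  | cons {q : Fin V.n} {v : Fin k → ℕ} {a : A} {d : Fin k → ℤ} {q' : Fin V.n}
      {w : List A} {c' : V.Conf} :
      (q, a, d, q') ∈ V.trans →
      (∀ i, 0 ≤ (v i : ℤ) + d i) →
      Run V (q', fun i => ((v i : ℤ) + d i).toNat) w c' →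
      Run V (q, v) (a :: w) c'

/-- The initial configuration: initial state with all counters zero. -/
def initConf (V : VASS k A) : V.Conf := (V.init, fun _ => 0)

/-- Coverability acceptance: some run ends in an accepting state. -/
def LangCover (V : VASS k A) : Set (List A) :=
  {w | ∃ c, V.Run V.initConf w c ∧ c.1 ∈ V.acc}

/-- Reachability acceptance: some run ends in an accepting state with all counters zero. -/
def LangReach (V : VASS k A) : Set (List A) :=
  {w | ∃ c, V.Run V.initConf w c ∧ c.1 ∈ V.acc ∧ c.2 = fun _ => 0}

/-- Deterministic: at most one outgoing transition per state and letter. -/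
def Det (V : VASS k A) : Prop :=
  ∀ q a d₁ q₁ d₂ q₂, (q, a, d₁, q₁) ∈ V.trans → (q, a, d₂, q₂) ∈ V.trans →
    d₁ = d₂ ∧ q₁ = q₂

/-- A resolver: given the history (the word read so far) and the next letter,
choose the effect and target state of the transition to take. -/
def Resolver (V : VASS k A) := List A → A → (Fin k → ℤ) × Fin V.n

/-- One step of the run built by a resolver (carrying the prefix read so far). -/
noncomputable def resStep (V : VASS k A) (r : V.Resolver) :
    (List A × Option V.Conf) → A → (List A × Option V.Conf) :=
  fun p a =>
    (p.1 ++ [a],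
      p.2.bind fun c =>
        let t := r p.1 a
        if (c.1, a, t.1, t.2) ∈ V.trans ∧ ∀ i, 0 ≤ ((c.2 i : ℤ) + t.1 i) then
          some (t.2, fun i => ((c.2 i : ℤ) + t.1 i).toNat)
        else none)

/-- The configuration reached by following the resolver on `w` (if the run survives). -/
noncomputable def resRun (V : VASS k A) (r : V.Resolver) (w : List A) : Option V.Conf :=
  (w.foldl (V.resStep r) ([], some V.initConf)).2

/-- History-determinism for coverability acceptance:
some resolver's run accepts every word of the language. -/
def HDCover (V : VASS k A) : Prop :=
  ∃ r : V.Resolver, ∀ w ∈ V.LangCover,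
    ∃ c, V.resRun r w = some c ∧ c.1 ∈ V.acc

/-- History-determinism for reachability acceptance. -/
def HDReach (V : VASS k A) : Prop :=
  ∃ r : V.Resolver, ∀ w ∈ V.LangReach,
    ∃ c, V.resRun r w = some c ∧ c.1 ∈ V.acc ∧ c.2 = fun _ => 0

/-- Coverability language of a VASS with ε-transitions (letter `none` is silent):
the input word is the sequence of actual letters read. -/
def LangCoverE (V : VASS k (Option A)) : Set (List A) :=
  {w | ∃ u c, V.Run V.initConf u c ∧ u.reduceOption = w ∧ c.1 ∈ V.acc}

/-- Reachability language of a VASS with ε-transitions. -/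
def LangReachE (V : VASS k (Option A)) : Set (List A) :=
  {w | ∃ u c, V.Run V.initConf u c ∧ u.reduceOption = w ∧ c.1 ∈ V.acc ∧ c.2 = fun _ => 0}

/-- History-determinism with ε-transitions, coverability: a resolver together with a
(prefix-monotone) scheduling of silent moves accepts every word of the language. -/
def HDCoverE (V : VASS k (Option A)) : Prop :=
  ∃ (r : V.Resolver) (f : List A → List (Option A)),
    (∀ u w, u <+: w → f u <+: f w) ∧
    ∀ w ∈ V.LangCoverE, (f w).reduceOption = w ∧
      ∃ c, V.resRun r (f w) = some c ∧ c.1 ∈ V.acc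

/-- History-determinism with ε-transitions, reachability. -/
def HDReachE (V : VASS k (Option A)) : Prop :=
  ∃ (r : V.Resolver) (f : List A → List (Option A)),
    (∀ u w, u <+: w → f u <+: f w) ∧
    ∀ w ∈ V.LangReachE, (f w).reduceOption = w ∧
      ∃ c, V.resRun r (f w) = some c ∧ c.1 ∈ V.acc ∧ c.2 = fun _ => 0

end VASS
namespace VASSUnion

open VASS

variable {k k₁ k₂ : ℕ} {A : Type}


lemma foldl_fst (V : VASS k A) (r : V.Resolver) :
    ∀ (w : List A) (p : List A × Option V.Conf),
      (w.foldl (V.resStep r) p).1 = p.1 ++ w := by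
  intro w
  induction w with
  | nil => intro p; simp
  | cons a w ih =>
    intro p
    rw [List.foldl_cons, ih]
    simp [VASS.resStep]

lemma resRun_snoc (V : VASS k A) (r : V.Resolver) (w : List A) (a : A) :
    V.resRun r (w ++ [a]) = (V.resRun r w).bind (fun c =>
      let t := r w a
      if (c.1, a, t.1, t.2) ∈ V.trans ∧ ∀ i, 0 ≤ ((c.2 i : ℤ) + t.1 i) then
        some (t.2, fun i => ((c.2 i : ℤ) + t.1 i).toNat)
      else none) := by
  unfold VASS.resRun
  rw [List.foldl_append]
  have h1 : (w.foldl (V.resStep r) ([], some V.initConf)).1 = w := by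
    simpa using foldl_fst V r w ([], some V.initConf)
  conv_lhs => rw [show (w.foldl (V.resStep r) ([], some V.initConf)) =
    ((w.foldl (V.resStep r) ([], some V.initConf)).1,
     (w.foldl (V.resStep r) ([], some V.initConf)).2) from rfl, h1]
  simp [VASS.resStep]

lemma resRun_nil (V : VASS k A) (r : V.Resolver) : V.resRun r [] = some V.initConf := rfl

lemma append_toNat (v₁ : Fin k₁ → ℕ) (v₂ : Fin k₂ → ℕ) (d₁ : Fin k₁ → ℤ) (d₂ : Fin k₂ → ℤ) :
    (fun i => (((Fin.append v₁ v₂ i : ℕ) : ℤ) + Fin.append d₁ d₂ i).toNat)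
      = Fin.append (fun i => ((v₁ i : ℤ) + d₁ i).toNat) (fun i => ((v₂ i : ℤ) + d₂ i).toNat) := by
  funext i
  refine Fin.addCases (fun j => ?_) (fun j => ?_) i <;>
    simp [Fin.append_left, Fin.append_right]

lemma append_zero (k₁ k₂ : ℕ) :
    (fun _ => 0 : Fin (k₁ + k₂) → ℕ) = Fin.append (fun _ => 0) (fun _ => 0) := by
  funext i
  refine Fin.addCases (fun j => ?_) (fun j => ?_) i <;>
    simp [Fin.append_left, Fin.append_right]

end VASSUnion
namespace VASSUnion

/-- One component step in the union VASS: either a genuine transition (between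
alive states) or a "give up" move to the dead state `Fin.last` with zero effect. -/
def cStep (V : VASS k A) (p : Fin (V.n + 1)) (a : A) (d : Fin k → ℤ)
    (p' : Fin (V.n + 1)) : Prop :=
  (∃ q q', p = q.castSucc ∧ p' = q'.castSucc ∧ (q, a, d, q') ∈ V.trans) ∨
    (d = (fun _ => 0) ∧ p' = Fin.last V.n)

/-- The union (product) VASS of two VASS. -/
def unionVASS (V₁ : VASS k₁ A) (V₂ : VASS k₂ A) : VASS (k₁ + k₂) A where
  n := (V₁.n + 1) * (V₂.n + 1)
  trans := { t | ∃ p₁ p₂ a d₁ d₂ p₁' p₂',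
    t = (finProdFinEquiv (p₁, p₂), a, Fin.append d₁ d₂, finProdFinEquiv (p₁', p₂')) ∧
    cStep V₁ p₁ a d₁ p₁' ∧ cStep V₂ p₂ a d₂ p₂' }
  init := finProdFinEquiv (V₁.init.castSucc, V₂.init.castSucc)
  acc := { s | ∃ p₁ p₂, s = finProdFinEquiv (p₁, p₂) ∧
    ((∃ q ∈ V₁.acc, p₁ = q.castSucc) ∨ (∃ q ∈ V₂.acc, p₂ = q.castSucc)) }

variable {V₁ : VASS k₁ A} {V₂ : VASS k₂ A}

lemma pair_inj {a b : Fin (V₁.n + 1)} {c d : Fin (V₂.n + 1)}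
    (h : (finProdFinEquiv (a, c) : Fin ((V₁.n+1)*(V₂.n+1))) = finProdFinEquiv (b, d)) :
    a = b ∧ c = d := by
  have := finProdFinEquiv.injective h
  exact ⟨congrArg Prod.fst this, congrArg Prod.snd this⟩

lemma castSucc_ne_last {n : ℕ} (q : Fin n) : q.castSucc ≠ Fin.last n :=
  Fin.ne_of_lt (Fin.castSucc_lt_last q)

end VASSUnion
namespace VASSUnion

variable {k₁ k₂ : ℕ} {A : Type} {V₁ : VASS k₁ A} {V₂ : VASS k₂ A}

local notation "W" => unionVASS V₁ V₂

lemma dead_absorb₁ {u : List A} {c c' : (W).Conf} (h : (W).Run c u c') :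
    ∀ s₂, c.1 = finProdFinEquiv (Fin.last V₁.n, s₂) →
      ∃ s₂', c'.1 = finProdFinEquiv (Fin.last V₁.n, s₂') := by
  induction h with
  | nil c => exact fun s₂ h => ⟨s₂, h⟩
  | cons ht hnn hrun ih =>
    intro s₂ hc
    obtain ⟨p₁, p₂, a', d₁, d₂, p₁', p₂', heq, hs₁, hs₂⟩ := ht
    replace heq := (Prod.mk.inj heq).imp id (fun h => (Prod.mk.inj h).imp id Prod.mk.inj)
    obtain ⟨hq, ha, hd, hq'⟩ := heq
    obtain ⟨e1, e2⟩ := pair_inj (hq.symm.trans hc)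
    rcases hs₁ with ⟨qa, qb, hqa, -, -⟩ | ⟨-, hlast⟩
    · exact absurd (e1.symm.trans hqa).symm (castSucc_ne_last qa)
    · exact ih p₂' (by rw [hq', hlast])

end VASSUnion

namespace VASSUnion

variable {k₁ k₂ : ℕ} {A : Type} {V₁ : VASS k₁ A} {V₂ : VASS k₂ A}

local notation "W" => unionVASS V₁ V₂

lemma proj₁ {u : List A} {c c' : (W).Conf} (h : (W).Run c u c') :
    ∀ (q₁ : Fin V₁.n) (s₂ : Fin (V₂.n+1)), c.1 = finProdFinEquiv (q₁.castSucc, s₂) →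
    ∀ (q₁' : Fin V₁.n) (s₂' : Fin (V₂.n+1)), c'.1 = finProdFinEquiv (q₁'.castSucc, s₂') →
      V₁.Run (q₁, fun i => c.2 (Fin.castAdd k₂ i)) u
        (q₁', fun i => c'.2 (Fin.castAdd k₂ i)) := by
  induction h with
  | nil c =>
    intro q₁ s₂ hc q₁' s₂' hc'
    obtain ⟨e1, e2⟩ := pair_inj (hc.symm.trans hc')
    obtain rfl : q₁ = q₁' := Fin.castSucc_injective _ e1
    exact VASS.Run.nil _
  | @cons q v a d q' w c' ht hnn hrun ih =>
    intro q₁ s₂ hc q₁' s₂' hc'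
    obtain ⟨p₁, p₂, a', d₁, d₂, p₁', p₂', heq, hs₁, hs₂⟩ := ht
    replace heq := (Prod.mk.inj heq).imp id (fun h => (Prod.mk.inj h).imp id Prod.mk.inj)
    obtain ⟨hq, rfl, hd, hq'⟩ := heq
    dsimp at hc
    obtain ⟨e1, e2⟩ := pair_inj (hq.symm.trans hc)
    rcases hs₁ with ⟨qa, qb, hqa, hqb, htr⟩ | ⟨-, hlast⟩
    · obtain rfl : qa = q₁ := Fin.castSucc_injective _ (hqa.symm.trans e1)
      refine VASS.Run.cons htr (fun i => ?_) ?_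
      · have := hnn (Fin.castAdd k₂ i)
        rwa [hd, Fin.append_left] at this
      · have hrest : (fun i => (((v (Fin.castAdd k₂ i) : ℕ) : ℤ) + d (Fin.castAdd k₂ i)).toNat)
            = fun i => (((v (Fin.castAdd k₂ i) : ℕ) : ℤ) + d₁ i).toNat := by
          funext i; rw [hd, Fin.append_left]
        have := ih qb p₂' (by rw [hq', hqb]) q₁' s₂' hc'
        dsimp at this ⊢
        rwa [hrest] at this
    · exfalso
      obtain ⟨s'', hs''⟩ := dead_absorb₁ hrun p₂' (by rw [hq', hlast])
      obtain ⟨e3, -⟩ := pair_inj (hs''.symm.trans hc')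
      exact castSucc_ne_last q₁' e3.symm

end VASSUnion

namespace VASSUnion

variable {k₁ k₂ : ℕ} {A : Type} {V₁ : VASS k₁ A} {V₂ : VASS k₂ A}

local notation "W" => unionVASS V₁ V₂

lemma dead_absorb₂ {u : List A} {c c' : (W).Conf} (h : (W).Run c u c') :
    ∀ s₁, c.1 = finProdFinEquiv (s₁, Fin.last V₂.n) →
      ∃ s₁', c'.1 = finProdFinEquiv (s₁', Fin.last V₂.n) := by
  induction h with
  | nil c => exact fun s₁ h => ⟨s₁, h⟩
  | cons ht hnn hrun ih =>
    intro s₁ hc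
    obtain ⟨p₁, p₂, a', d₁, d₂, p₁', p₂', heq, hs₁, hs₂⟩ := ht
    replace heq := (Prod.mk.inj heq).imp id (fun h => (Prod.mk.inj h).imp id Prod.mk.inj)
    obtain ⟨hq, ha, hd, hq'⟩ := heq
    obtain ⟨e1, e2⟩ := pair_inj (hq.symm.trans hc)
    rcases hs₂ with ⟨qa, qb, hqa, -, -⟩ | ⟨-, hlast⟩
    · exact absurd (e2.symm.trans hqa).symm (castSucc_ne_last qa)
    · exact ih p₁' (by rw [hq', hlast])

lemma proj₂ {u : List A} {c c' : (W).Conf} (h : (W).Run c u c') :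
    ∀ (s₁ : Fin (V₁.n+1)) (q₂ : Fin V₂.n), c.1 = finProdFinEquiv (s₁, q₂.castSucc) →
    ∀ (s₁' : Fin (V₁.n+1)) (q₂' : Fin V₂.n), c'.1 = finProdFinEquiv (s₁', q₂'.castSucc) →
      V₂.Run (q₂, fun i => c.2 (Fin.natAdd k₁ i)) u
        (q₂', fun i => c'.2 (Fin.natAdd k₁ i)) := by
  induction h with
  | nil c =>
    intro s₁ q₂ hc s₁' q₂' hc'
    obtain ⟨e1, e2⟩ := pair_inj (hc.symm.trans hc')
    obtain rfl : q₂ = q₂' := Fin.castSucc_injective _ e2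
    exact VASS.Run.nil _
  | @cons q v a d q' w c' ht hnn hrun ih =>
    intro s₁ q₂ hc s₁' q₂' hc'
    obtain ⟨p₁, p₂, a', d₁, d₂, p₁', p₂', heq, hs₁, hs₂⟩ := ht
    replace heq := (Prod.mk.inj heq).imp id (fun h => (Prod.mk.inj h).imp id Prod.mk.inj)
    obtain ⟨hq, rfl, hd, hq'⟩ := heq
    dsimp at hc
    obtain ⟨e1, e2⟩ := pair_inj (hq.symm.trans hc)
    rcases hs₂ with ⟨qa, qb, hqa, hqb, htr⟩ | ⟨-, hlast⟩
    · obtain rfl : qa = q₂ := Fin.castSucc_injective _ (hqa.symm.trans e2)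
      refine VASS.Run.cons htr (fun i => ?_) ?_
      · have := hnn (Fin.natAdd k₁ i)
        rwa [hd, Fin.append_right] at this
      · have hrest : (fun i => (((v (Fin.natAdd k₁ i) : ℕ) : ℤ) + d (Fin.natAdd k₁ i)).toNat)
            = fun i => (((v (Fin.natAdd k₁ i) : ℕ) : ℤ) + d₂ i).toNat := by
          funext i; rw [hd, Fin.append_right]
        have := ih p₁' qb (by rw [hq', hqb]) s₁' q₂' hc'
        dsimp at this ⊢
        rwa [hrest] at this
    · exfalso
      obtain ⟨s'', hs''⟩ := dead_absorb₂ hrun p₁' (by rw [hq', hlast])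
      obtain ⟨-, e3⟩ := pair_inj (hs''.symm.trans hc')
      exact castSucc_ne_last q₂' e3.symm

end VASSUnion

namespace VASSUnion

variable {k₁ k₂ : ℕ} {A : Type} {V₁ : VASS k₁ A} {V₂ : VASS k₂ A}

local notation "W" => unionVASS V₁ V₂

lemma append_toNat_zero_right (v₁ : Fin k₁ → ℕ) (v₂ : Fin k₂ → ℕ) (d₁ : Fin k₁ → ℤ) :
    (fun i => (((Fin.append v₁ v₂ i : ℕ) : ℤ) + Fin.append d₁ (fun _ => 0) i).toNat)
      = Fin.append (fun i => (((v₁ i : ℕ) : ℤ) + d₁ i).toNat) v₂ := by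
  rw [append_toNat]
  congr 1

lemma append_toNat_zero_left (v₁ : Fin k₁ → ℕ) (v₂ : Fin k₂ → ℕ) (d₂ : Fin k₂ → ℤ) :
    (fun i => (((Fin.append v₁ v₂ i : ℕ) : ℤ) + Fin.append (fun _ => 0 : Fin k₁ → ℤ) d₂ i).toNat)
      = Fin.append v₁ (fun i => (((v₂ i : ℕ) : ℤ) + d₂ i).toNat) := by
  rw [append_toNat]
  congr 1

lemma emb₁ {u : List A} {c c' : V₁.Conf} (h : V₁.Run c u c') :
    ∀ (s₂ : Fin (V₂.n + 1)) (v₂ : Fin k₂ → ℕ), ∃ s₂',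
      (W).Run (finProdFinEquiv (c.1.castSucc, s₂), Fin.append c.2 v₂) u
        (finProdFinEquiv (c'.1.castSucc, s₂'), Fin.append c'.2 v₂) := by
  induction h with
  | nil c => exact fun s₂ v₂ => ⟨s₂, VASS.Run.nil _⟩
  | @cons q v a d q' w c' ht hnn hrun ih =>
    intro s₂ v₂
    obtain ⟨s₂', hW⟩ := ih (Fin.last V₂.n) v₂
    refine ⟨s₂', VASS.Run.cons (d := Fin.append d (fun _ => 0))
      ⟨q.castSucc, s₂, a, d, (fun _ => 0), q'.castSucc, Fin.last V₂.n,
        rfl, Or.inl ⟨q, q', rfl, rfl, ht⟩, Or.inr ⟨rfl, rfl⟩⟩ (fun i => ?_) ?_⟩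
    · refine Fin.addCases (fun j => ?_) (fun j => ?_) i
      · rw [Fin.append_left, Fin.append_left]; exact hnn j
      · rw [Fin.append_right, Fin.append_right]; positivity
    · rw [append_toNat_zero_right]
      exact hW

lemma emb₂ {u : List A} {c c' : V₂.Conf} (h : V₂.Run c u c') :
    ∀ (s₁ : Fin (V₁.n + 1)) (v₁ : Fin k₁ → ℕ), ∃ s₁',
      (W).Run (finProdFinEquiv (s₁, c.1.castSucc), Fin.append v₁ c.2) u
        (finProdFinEquiv (s₁', c'.1.castSucc), Fin.append v₁ c'.2) := by
  induction h with
  | nil c => exact fun s₁ v₁ => ⟨s₁, VASS.Run.nil _⟩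
  | @cons q v a d q' w c' ht hnn hrun ih =>
    intro s₁ v₁
    obtain ⟨s₁', hW⟩ := ih (Fin.last V₁.n) v₁
    refine ⟨s₁', VASS.Run.cons (d := Fin.append (fun _ => 0) d)
      ⟨s₁, q.castSucc, a, (fun _ => 0), d, Fin.last V₁.n, q'.castSucc,
        rfl, Or.inr ⟨rfl, rfl⟩, Or.inl ⟨q, q', rfl, rfl, ht⟩⟩ (fun i => ?_) ?_⟩
    · refine Fin.addCases (fun j => ?_) (fun j => ?_) i
      · rw [Fin.append_left, Fin.append_left]; positivity
      · rw [Fin.append_right, Fin.append_right]; exact hnn j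
    · rw [append_toNat_zero_left]
      exact hW

end VASSUnion

namespace VASSUnion

variable {k k₁ k₂ : ℕ} {A : Type}

/-- The component choice of the combined resolver: follow the component's own
resolver while its run is alive and the proposed transition is valid; otherwise
move to the dead state with zero effect. -/
noncomputable def choose1 (V : VASS k A) (r : V.Resolver) (u : List A) (a : A) :
    (Fin k → ℤ) × Fin (V.n + 1) :=
  match V.resRun r u with
  | none => (fun _ => 0, Fin.last V.n)
  | some c =>
    if (c.1, a, (r u a).1, (r u a).2) ∈ V.trans ∧ (∀ i, 0 ≤ ((c.2 i : ℤ) + (r u a).1 i))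
    then ((r u a).1, (r u a).2.castSucc) else (fun _ => 0, Fin.last V.n)

lemma choose1_spec (V : VASS k A) (r : V.Resolver) (u : List A) (a : A)
    (s : Fin (V.n + 1)) (v : Fin k → ℕ)
    (hs : ∀ c, V.resRun r u = some c → s = c.1.castSucc ∧ v = c.2)
    (hn : V.resRun r u = none → s = Fin.last V.n) :
    cStep V s a (choose1 V r u a).1 (choose1 V r u a).2 ∧
    (∀ i, 0 ≤ ((v i : ℤ) + (choose1 V r u a).1 i)) ∧
    (∀ c, V.resRun r (u ++ [a]) = some c →
      (choose1 V r u a).2 = c.1.castSucc ∧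
      (fun i => ((v i : ℤ) + (choose1 V r u a).1 i).toNat) = c.2) ∧
    (V.resRun r (u ++ [a]) = none → (choose1 V r u a).2 = Fin.last V.n) := by
  rcases h : V.resRun r u with _ | c
  · refine ⟨Or.inr ⟨by simp [choose1, h], by simp [choose1, h]⟩, ?_, ?_, fun _ => by simp [choose1, h]⟩
    · intro i; simp [choose1, h]
    · intro c hc
      rw [resRun_snoc, h] at hc
      simp at hc
  · obtain ⟨rfl, rfl⟩ := hs c h
    by_cases hC : (c.1, a, (r u a).1, (r u a).2) ∈ V.trans ∧
        (∀ i, 0 ≤ ((c.2 i : ℤ) + (r u a).1 i))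
    · have hch : choose1 V r u a = ((r u a).1, (r u a).2.castSucc) := by
        simp only [choose1, h]; rw [if_pos hC]
      rw [hch]
      refine ⟨Or.inl ⟨c.1, (r u a).2, rfl, rfl, hC.1⟩, hC.2, ?_, ?_⟩
      · intro c' hc'
        rw [resRun_snoc, h] at hc'
        simp only [Option.bind_some] at hc'
        rw [if_pos hC] at hc'
        obtain rfl := Option.some_injective _ hc'
        exact ⟨rfl, rfl⟩
      · intro hc'
        rw [resRun_snoc, h] at hc'
        simp only [Option.bind_some] at hc'
        rw [if_pos hC] at hc'
        exact absurd hc' (by simp)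
    · have hch : choose1 V r u a = (fun _ => 0, Fin.last V.n) := by
        simp only [choose1, h]; rw [if_neg hC]
      rw [hch]
      refine ⟨Or.inr ⟨rfl, rfl⟩, by intro i; simp, ?_, fun _ => rfl⟩
      intro c' hc'
      rw [resRun_snoc, h] at hc'
      simp only [Option.bind_some] at hc'
      rw [if_neg hC] at hc'
      simp at hc'

end VASSUnion

namespace VASSUnion

variable {k₁ k₂ : ℕ} {A : Type} {V₁ : VASS k₁ A} {V₂ : VASS k₂ A}

local notation "W" => unionVASS V₁ V₂

/-- The combined resolver for the union VASS. -/
noncomputable def unionResolver (r₁ : V₁.Resolver) (r₂ : V₂.Resolver) : (W).Resolver :=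
  fun u a =>
    (Fin.append (choose1 V₁ r₁ u a).1 (choose1 V₂ r₂ u a).1,
      finProdFinEquiv ((choose1 V₁ r₁ u a).2, (choose1 V₂ r₂ u a).2))

lemma resRun_invariant (r₁ : V₁.Resolver) (r₂ : V₂.Resolver) (w : List A) :
    ∃ s₁ s₂ v₁ v₂,
      (W).resRun (unionResolver r₁ r₂) w
        = some (finProdFinEquiv (s₁, s₂), Fin.append v₁ v₂) ∧
      (∀ c, V₁.resRun r₁ w = some c → s₁ = c.1.castSucc ∧ v₁ = c.2) ∧
      (V₁.resRun r₁ w = none → s₁ = Fin.last V₁.n) ∧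
      (∀ c, V₂.resRun r₂ w = some c → s₂ = c.1.castSucc ∧ v₂ = c.2) ∧
      (V₂.resRun r₂ w = none → s₂ = Fin.last V₂.n) := by
  induction w using List.reverseRecOn with
  | nil =>
    refine ⟨V₁.init.castSucc, V₂.init.castSucc, (fun _ => 0), (fun _ => 0), ?_, ?_, ?_, ?_, ?_⟩
    · rw [resRun_nil]
      simp only [VASS.initConf]
      rw [append_zero]
      rfl
    · intro c hc
      rw [resRun_nil] at hc
      obtain rfl := Option.some_injective _ hc
      exact ⟨rfl, rfl⟩
    · intro hc; rw [resRun_nil] at hc; simp at hc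
    · intro c hc
      rw [resRun_nil] at hc
      obtain rfl := Option.some_injective _ hc
      exact ⟨rfl, rfl⟩
    · intro hc; rw [resRun_nil] at hc; simp at hc
  | append_singleton w a ih =>
    obtain ⟨s₁, s₂, v₁, v₂, hW, hs1, hn1, hs2, hn2⟩ := ih
    obtain ⟨hstep1, hpos1, hsome1, hnone1⟩ := choose1_spec V₁ r₁ w a s₁ v₁ hs1 hn1
    obtain ⟨hstep2, hpos2, hsome2, hnone2⟩ := choose1_spec V₂ r₂ w a s₂ v₂ hs2 hn2
    have hcond : ((finProdFinEquiv (s₁, s₂) : Fin ((W).n)), a,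
          (unionResolver r₁ r₂ w a).1, (unionResolver r₁ r₂ w a).2) ∈ (W).trans ∧
        ∀ i, 0 ≤ (((Fin.append v₁ v₂ i : ℕ) : ℤ) + (unionResolver r₁ r₂ w a).1 i) := by
      constructor
      · exact ⟨s₁, s₂, a, (choose1 V₁ r₁ w a).1, (choose1 V₂ r₂ w a).1,
          (choose1 V₁ r₁ w a).2, (choose1 V₂ r₂ w a).2, rfl, hstep1, hstep2⟩
      · intro i
        refine Fin.addCases (fun j => ?_) (fun j => ?_) i
        · show 0 ≤ ((Fin.append v₁ v₂ (Fin.castAdd k₂ j) : ℕ) : ℤ)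
            + Fin.append (choose1 V₁ r₁ w a).1 (choose1 V₂ r₂ w a).1 (Fin.castAdd k₂ j)
          rw [Fin.append_left, Fin.append_left]; exact hpos1 j
        · show 0 ≤ ((Fin.append v₁ v₂ (Fin.natAdd k₁ j) : ℕ) : ℤ)
            + Fin.append (choose1 V₁ r₁ w a).1 (choose1 V₂ r₂ w a).1 (Fin.natAdd k₁ j)
          rw [Fin.append_right, Fin.append_right]; exact hpos2 j
    refine ⟨(choose1 V₁ r₁ w a).2, (choose1 V₂ r₂ w a).2,
      (fun i => (((v₁ i : ℕ) : ℤ) + (choose1 V₁ r₁ w a).1 i).toNat),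
      (fun i => (((v₂ i : ℕ) : ℤ) + (choose1 V₂ r₂ w a).1 i).toNat), ?_, ?_, ?_, ?_, ?_⟩
    · rw [resRun_snoc, hW]
      refine Eq.trans (Option.bind_some ..) ?_; dsimp only
      refine Eq.trans (if_pos hcond) ?_
      rw [show (fun i => (((Fin.append v₁ v₂ i : ℕ) : ℤ) + (unionResolver r₁ r₂ w a).1 i).toNat)
        = _ from append_toNat v₁ v₂ (choose1 V₁ r₁ w a).1 (choose1 V₂ r₂ w a).1]
      rfl
    · exact fun c hc => ⟨(hsome1 c hc).1, (hsome1 c hc).2⟩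
    · exact hnone1
    · exact fun c hc => ⟨(hsome2 c hc).1, (hsome2 c hc).2⟩
    · exact hnone2

lemma langCover_union : (W).LangCover = V₁.LangCover ∪ V₂.LangCover := by
  ext w
  constructor
  · rintro ⟨c, hrun, p₁, p₂, hc, ⟨q, hq, rfl⟩ | ⟨q, hq, rfl⟩⟩
    · exact Or.inl ⟨(q, fun i => c.2 (Fin.castAdd k₂ i)),
        proj₁ hrun V₁.init V₂.init.castSucc rfl q p₂ hc, hq⟩
    · exact Or.inr ⟨(q, fun i => c.2 (Fin.natAdd k₁ i)),
        proj₂ hrun V₁.init.castSucc V₂.init rfl p₁ q hc, hq⟩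
  · have hinit : (W).initConf = (finProdFinEquiv (V₁.init.castSucc, V₂.init.castSucc),
        Fin.append (fun _ => 0 : Fin k₁ → ℕ) (fun _ => 0)) := by
      simp only [VASS.initConf]
      rw [append_zero]
      rfl
    rintro (⟨c, hrun, hacc⟩ | ⟨c, hrun, hacc⟩)
    · obtain ⟨s₂', hW⟩ := emb₁ hrun V₂.init.castSucc (fun _ => 0)
      exact ⟨_, hinit ▸ hW, ⟨c.1.castSucc, s₂', rfl, Or.inl ⟨c.1, hacc, rfl⟩⟩⟩
    · obtain ⟨s₁', hW⟩ := emb₂ hrun V₁.init.castSucc (fun _ => 0)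
      exact ⟨_, hinit ▸ hW, ⟨s₁', c.1.castSucc, rfl, Or.inr ⟨c.1, hacc, rfl⟩⟩⟩

end VASSUnion

/-- Languages of history-deterministic VASS with coverability acceptance are
closed under (finite) union. -/
theorem stmt11 (A : Type) (k₁ k₂ : ℕ) (V₁ : VASS k₁ A) (V₂ : VASS k₂ A)
    (h₁ : V₁.HDCover) (h₂ : V₂.HDCover) :
    ∃ (k : ℕ) (W : VASS k A), W.HDCover ∧
      W.LangCover = V₁.LangCover ∪ V₂.LangCover := by
  obtain ⟨r₁, hr₁⟩ := h₁
  obtain ⟨r₂, hr₂⟩ := h₂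
  refine ⟨k₁ + k₂, VASSUnion.unionVASS V₁ V₂, ?_, VASSUnion.langCover_union⟩
  refine ⟨VASSUnion.unionResolver r₁ r₂, fun w hw => ?_⟩
  rw [VASSUnion.langCover_union] at hw
  obtain ⟨s₁, s₂, v₁, v₂, hW, hs1, hn1, hs2, hn2⟩ := VASSUnion.resRun_invariant r₁ r₂ w
  rcases hw with hw | hw
  · obtain ⟨c, hres, hacc⟩ := hr₁ w hw
    exact ⟨_, hW, ⟨s₁, s₂, rfl, Or.inl ⟨c.1, hacc, (hs1 c hres).1⟩⟩⟩
  · obtain ⟨c, hres, hacc⟩ := hr₂ w hw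
    exact ⟨_, hW, ⟨s₁, s₂, rfl, Or.inr ⟨c.1, hacc, (hs2 c hres).1⟩⟩⟩
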